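/- Let R be a graded commutative 2-ring. Then Spec R is a spectral topological space: it is T₀, quasi-compact, it has a basis of quasi-compact open subsets which is closed under finite intersections, and every irreducible closed subset has a unique generic point. Moreover, the collection {D_r : r a morphism of R} is such a basis of quasi-compact open subsets. -/

import Mathlib

open CategoryTheory CategoryTheory.Limits CategoryTheory.MonoidalCategory

universe w v u v' u' v'' u''

/-- A *graded commutative 2-ring*: an essentially small preadditive symmetric monoidal
category whose tensor product is additive in each variable and in which every object
is invertible for the tensor product. -/
class GradedComm2Ring (C : Type u) [Category.{v} C] [Preadditive C] [MonoidalCategory C]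
    [SymmetricCategory C] [MonoidalPreadditive C] : Prop where
  essentiallySmall : EssentiallySmall.{v} C
  invertible : ∀ g : C, ∃ g' : C, Nonempty (g ⊗ g' ≅ 𝟙_ C)
section IdealDef

variable (C : Type u) [Category.{v} C] [Preadditive C] [MonoidalCategory C]

/-- A *homogeneous ideal* of a graded commutative 2-ring: a family of subgroups
`I(g,h) ⊆ Hom(g,h)` closed under composition with arbitrary morphisms on either side
and under tensoring with arbitrary morphisms on either side. -/
structure HomIdeal where
  carrier : ∀ g h : C, AddSubgroup (g ⟶ h)
  comp_left : ∀ {g h h' : C} (r : g ⟶ h) (s : h ⟶ h'),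
      r ∈ carrier g h → r ≫ s ∈ carrier g h'
  comp_right : ∀ {g' g h : C} (t : g' ⟶ g) (r : g ⟶ h),
      r ∈ carrier g h → t ≫ r ∈ carrier g' h
  tensor_left : ∀ {g h g' h' : C} (s : g' ⟶ h') (r : g ⟶ h),
      r ∈ carrier g h → (s ⊗ₘ r) ∈ carrier (g' ⊗ g) (h' ⊗ h)
  tensor_right : ∀ {g h g' h' : C} (r : g ⟶ h) (s : g' ⟶ h'),
      r ∈ carrier g h → (r ⊗ₘ s) ∈ carrier (g ⊗ g') (h ⊗ h')

variable {C}

namespace HomIdeal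

instance : PartialOrder (HomIdeal C) where
  le I J := ∀ g h : C, I.carrier g h ≤ J.carrier g h
  le_refl I g h := le_rfl
  le_trans I J K h₁ h₂ g h := (h₁ g h).trans (h₂ g h)
  le_antisymm I J h₁ h₂ := by
    cases I; cases J
    congr
    funext g h
    exact le_antisymm (h₁ g h) (h₂ g h)

/-- A homogeneous ideal is *proper* if it contains no identity morphism. -/
def IsProper (I : HomIdeal C) : Prop := ∀ g : C, 𝟙 g ∉ I.carrier g g

/-- A proper homogeneous ideal is *prime* if whenever a composite belongs to it, one
of the factors belongs to it. -/
structure IsPrime (I : HomIdeal C) : Prop where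
  isProper : I.IsProper
  mem_or_mem : ∀ {g h l : C} (r : g ⟶ h) (s : h ⟶ l),
      r ≫ s ∈ I.carrier g l → r ∈ I.carrier g h ∨ s ∈ I.carrier h l

end HomIdeal

end IdealDef
section SpecDef

/-- The (homogeneous) spectrum: the set of prime homogeneous ideals. -/
def Spec (C : Type u) [Category.{v} C] [Preadditive C] [MonoidalCategory C] :=
  {p : HomIdeal C // p.IsPrime}

variable {C : Type u} [Category.{v} C] [Preadditive C] [MonoidalCategory C]

/-- The closed set `V(I) = {p : I ⊆ p}`. -/
def zeroLocus (I : HomIdeal C) : Set (Spec C) := {p | I ≤ p.1}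

/-- The basic open set `D_r = {p : r ∉ p}`. -/
def basicOpen {g h : C} (r : g ⟶ h) : Set (Spec C) := {p | r ∉ p.1.carrier g h}

/-- The Zariski topology on `Spec C`, whose closed sets are the sets `V(I)` for
homogeneous ideals `I`. -/
instance : TopologicalSpace (Spec C) :=
  TopologicalSpace.generateFrom {U : Set (Spec C) | ∃ I : HomIdeal C, U = (zeroLocus I)ᶜ}

end SpecDef


/-!
The engine is Krull's argument: an ideal maximal among those containing `J` and avoiding all
tensor powers of `r` is prime, so `r` lies in every prime over `J` exactly when some tensor power
of `r` lies in `J`. For this one needs `(I + ⟨a⟩) ⊗ (I + ⟨b⟩) ⊆ I + ⟨a ⊗ b⟩ ⊆ I + ⟨a ≫ b⟩`; the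
last inclusion is where invertibility enters: the symmetry of `y ⊗ y` has the form `θ ▷ y`,
because tensoring with an invertible object is full, and this rewrites `a ⊗ b` as a multiple of
`a ≫ b`. Invertibility also makes primes "tensor-prime", whence `D_r ∩ D_s = D_{r ⊗ s}`.

Quasi-compactness of `D_r` then follows from Alexander's subbasis theorem, since a tensor power
of `r` lying in a sum of ideals already lies in a finite subsum. The `D_r` form a basis, so
`closure Z = V(I(Z))` for the vanishing ideal `I(Z)`; for irreducible `Z` this ideal is prime and
is the generic point of `Z`, and `closure {p} = V(p)` gives `T₀`.
-/

theorem AddSubgroup.map_mem_of_mem_closure {A B : Type*} [AddGroup A] [AddGroup B] (φ : A →+ B)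
    {S : Set A} {T : AddSubgroup B} (hS : ∀ x ∈ S, φ x ∈ T) {x : A}
    (hx : x ∈ AddSubgroup.closure S) : φ x ∈ T :=
  (AddSubgroup.closure_le (T.comap φ)).2 hS hx

theorem AddSubgroup.map₂_mem_of_mem_closure {A A' B : Type*} [AddGroup A] [AddGroup A']
    [AddCommGroup B] (φ : A →+ A' →+ B) {S : Set A} {S' : Set A'} {T : AddSubgroup B}
    (hS : ∀ x ∈ S, ∀ y ∈ S', φ x y ∈ T) {x : A} (hx : x ∈ AddSubgroup.closure S) {y : A'}
    (hy : y ∈ AddSubgroup.closure S') : φ x y ∈ T :=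
  AddSubgroup.map_mem_of_mem_closure (φ.flip y)
    (fun x hx => AddSubgroup.map_mem_of_mem_closure (φ x) (hS x hx) hy) hx

theorem AddSubgroup.exists_finset_of_mem_iSup {G ι : Type*} [AddGroup G] {S : ι → AddSubgroup G}
    {x : G} (hx : x ∈ ⨆ i, S i) : ∃ F : Finset ι, x ∈ ⨆ i ∈ F, S i := by
  have hdir : Directed (· ≤ ·) fun F : Finset ι => ⨆ i ∈ F, S i :=
    Monotone.directed_le fun _ _ hFG => biSup_mono fun _ hi => Finset.mem_of_subset hFG hi
  rw [iSup_eq_iSup_finset] at hx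
  exact (AddSubgroup.mem_iSup_of_directed hdir).1 hx

namespace CategoryTheory.MonoidalPreadditive

variable {C : Type u} [Category.{v} C] [Preadditive C] [MonoidalCategory C] [MonoidalPreadditive C]

def tensorHomAddHom (W X Y Z : C) : (W ⟶ X) →+ (Y ⟶ Z) →+ (W ⊗ Y ⟶ X ⊗ Z) :=
  AddMonoidHom.mk' (fun f => AddMonoidHom.mk' (f ⊗ₘ ·) (tensor_add f))
    fun f f' => by ext; exact add_tensor f f' _

end CategoryTheory.MonoidalPreadditive

namespace CategoryTheory.MonoidalCategory

variable {C : Type u} [Category.{v} C] [MonoidalCategory C]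

def tensorPow (x : C) : ℕ → C
  | 0 => 𝟙_ C
  | n + 1 => tensorPow x n ⊗ x

def tensorPowMap {x y : C} (r : x ⟶ y) : ∀ n : ℕ, tensorPow x n ⟶ tensorPow y n
  | 0 => 𝟙 (𝟙_ C)
  | n + 1 => tensorPowMap r n ⊗ₘ r

theorem tensorPowMap_add {x y : C} (r : x ⟶ y) (m n : ℕ) :
    ∃ (u : tensorPow x (m + n) ⟶ tensorPow x m ⊗ tensorPow x n)
      (v : tensorPow y m ⊗ tensorPow y n ⟶ tensorPow y (m + n)),
      tensorPowMap r (m + n) = u ≫ (tensorPowMap r m ⊗ₘ tensorPowMap r n) ≫ v := by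
  induction n with
  | zero => exact ⟨(ρ_ _).inv, (ρ_ _).hom, by dsimp only [tensorPowMap, tensorPow]; simp⟩
  | succ n ih =>
    obtain ⟨u, v, huv⟩ := ih
    refine ⟨u ▷ x ≫ (α_ _ _ _).hom, (α_ _ _ _).inv ≫ v ▷ y, ?_⟩
    change tensorPowMap r (m + n) ⊗ₘ r = (u ▷ x ≫ (α_ _ _ _).hom) ≫
      (tensorPowMap r m ⊗ₘ (tensorPowMap r n ⊗ₘ r)) ≫ (α_ _ _ _).inv ≫ v ▷ y
    rw [huv, Category.assoc, ← associator_naturality_assoc, Iso.hom_inv_id_assoc, ← tensorHom_id,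
      ← tensorHom_id, tensorHom_comp_tensorHom, tensorHom_comp_tensorHom]
    simp only [Category.id_comp, Category.comp_id]

variable [BraidedCategory C]

theorem tensorHom_eq_braiding_conj {g h g' h' : C} (f : g ⟶ h) (f' : g' ⟶ h') :
    f ⊗ₘ f' = (β_ g g').hom ≫ (f' ⊗ₘ f) ≫ (β_ h h').inv := by
  simp

theorem whiskerLeft_tensorHom_whiskerLeft {x y x' y' : C} (c c' : C) (a : x ⟶ y)
    (b : x' ⟶ y') :
    c ◁ a ⊗ₘ c' ◁ b = tensorμ c x c' x' ≫ (c ⊗ c') ◁ (a ⊗ₘ b) ≫ tensorδ c y c' y' := by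
  have hμ := tensorμ_natural (𝟙 c) a (𝟙 c') b
  rw [id_tensorHom_id] at hμ
  simp only [id_tensorHom] at hμ
  rw [← reassoc_of% hμ, tensorμ_tensorδ, Category.comp_id]

def tensorRightEquivalence {y y' : C} (e : y ⊗ y' ≅ 𝟙_ C) : C ≌ C :=
  Equivalence.mk (tensorRight y) (tensorRight y')
    (NatIso.ofComponents (fun X => (ρ_ X).symm ≪≫ whiskerLeftIso X e.symm ≪≫ (α_ X y y').symm)
      fun f => by
        dsimp
        simp only [whiskerLeftIso_hom, Iso.symm_hom, Category.assoc]
        rw [rightUnitor_inv_naturality_assoc, ← whisker_exchange_assoc,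
          associator_inv_naturality_left])
    (NatIso.ofComponents (fun X => α_ X y' y ≪≫ whiskerLeftIso X (β_ y' y ≪≫ e) ≪≫ ρ_ X)
      fun f => by
        dsimp
        simp only [whiskerLeftIso_hom, Iso.trans_hom, whiskerLeft_comp, Category.assoc]
        rw [associator_naturality_left_assoc, ← whisker_exchange_assoc, ← whisker_exchange_assoc,
          rightUnitor_naturality])

theorem exists_whiskerRight_eq {y y' : C} (e : y ⊗ y' ≅ 𝟙_ C) {A B : C} (f : A ⊗ y ⟶ B ⊗ y) :
    ∃ θ : A ⟶ B, θ ▷ y = f :=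
  (tensorRightEquivalence e).functor.map_surjective f

end CategoryTheory.MonoidalCategory

namespace HomIdeal

open MonoidalCategory

section SpanGenerators

variable {C : Type u} [Category.{v} C] [MonoidalCategory C] {x y : C}

def spanGenerators (r : x ⟶ y) (g h : C) : Set (g ⟶ h) :=
  {m | ∃ (c : C) (u : g ⟶ c ⊗ x) (v : c ⊗ y ⟶ h), m = u ≫ c ◁ r ≫ v}

theorem conj_mem_spanGenerators {r : x ⟶ y} {g h g' h' : C} {m : g ⟶ h}
    (hm : m ∈ spanGenerators r g h) (u : g' ⟶ g) (v : h ⟶ h') :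
    u ≫ m ≫ v ∈ spanGenerators r g' h' := by
  obtain ⟨c, u', v', rfl⟩ := hm
  exact ⟨c, u ≫ u', v' ≫ v, by simp⟩

theorem tensorHom_mem_spanGenerators {r : x ⟶ y} {g h g' h' : C} (s : g' ⟶ h') {m : g ⟶ h}
    (hm : m ∈ spanGenerators r g h) : s ⊗ₘ m ∈ spanGenerators r (g' ⊗ g) (h' ⊗ h) := by
  obtain ⟨c, u, v, rfl⟩ := hm
  refine ⟨h' ⊗ c, (s ⊗ₘ u) ≫ (α_ h' c x).inv, (α_ h' c y).hom ≫ h' ◁ v, ?_⟩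
  simp [MonoidalCategory.tensorHom_def]

end SpanGenerators

variable {C : Type u} [Category.{v} C] [Preadditive C] [MonoidalCategory C]

theorem le_def {I J : HomIdeal C} :
    I ≤ J ↔ ∀ (g h : C) (r : g ⟶ h), r ∈ I.carrier g h → r ∈ J.carrier g h :=
  Iff.rfl

theorem conj_mem (I : HomIdeal C) {g h g' h' : C} {f : g ⟶ h} (hf : f ∈ I.carrier g h)
    (u : g' ⟶ g) (v : h ⟶ h') : u ≫ f ≫ v ∈ I.carrier g' h' :=
  I.comp_right u _ (I.comp_left f v hf)

theorem mem_of_whiskerRight_mem (I : HomIdeal C) {x x' : C} (e : x ⊗ x' ≅ 𝟙_ C) {g h : C}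
    {r : g ⟶ h} (hr : r ▷ x ∈ I.carrier (g ⊗ x) (h ⊗ x)) : r ∈ I.carrier g h := by
  have hxx' : r ▷ (x ⊗ x') ∈ I.carrier _ _ := by
    simpa using I.conj_mem (I.tensor_right _ (𝟙 x') hr) (α_ g x x').inv (α_ h x x').hom
  have hunit : r ▷ 𝟙_ C ∈ I.carrier _ _ := by
    convert I.conj_mem hxx' (g ◁ e.inv) (h ◁ e.hom) using 1
    rw [whisker_exchange_assoc, ← whiskerLeft_comp, e.inv_hom_id, whiskerLeft_id,
      Category.comp_id]
  simpa using I.conj_mem hunit (ρ_ g).inv (ρ_ h).hom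

section Lattice

variable [MonoidalPreadditive C]

open MonoidalPreadditive

def ofGenerators (S : ∀ g h : C, Set (g ⟶ h))
    (comp_left : ∀ {g h h' : C} (r : g ⟶ h) (s : h ⟶ h'), r ∈ S g h → r ≫ s ∈ S g h')
    (comp_right : ∀ {g' g h : C} (t : g' ⟶ g) (r : g ⟶ h), r ∈ S g h → t ≫ r ∈ S g' h)
    (tensor_left : ∀ {g h g' h' : C} (s : g' ⟶ h') (r : g ⟶ h),
      r ∈ S g h → (s ⊗ₘ r) ∈ S (g' ⊗ g) (h' ⊗ h))
    (tensor_right : ∀ {g h g' h' : C} (r : g ⟶ h) (s : g' ⟶ h'),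
      r ∈ S g h → (r ⊗ₘ s) ∈ S (g ⊗ g') (h ⊗ h')) : HomIdeal C where
  carrier g h := AddSubgroup.closure (S g h)
  comp_left _ s := AddSubgroup.map_mem_of_mem_closure (Preadditive.rightComp _ s)
    fun x hx => AddSubgroup.subset_closure (comp_left x s hx)
  comp_right t _ := AddSubgroup.map_mem_of_mem_closure (Preadditive.leftComp _ t)
    fun x hx => AddSubgroup.subset_closure (comp_right t x hx)
  tensor_left s _ := AddSubgroup.map_mem_of_mem_closure (tensorHomAddHom _ _ _ _ s)
    fun x hx => AddSubgroup.subset_closure (tensor_left s x hx)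
  tensor_right _ s := AddSubgroup.map_mem_of_mem_closure ((tensorHomAddHom _ _ _ _).flip s)
    fun x hx => AddSubgroup.subset_closure (tensor_right x s hx)

instance : SupSet (HomIdeal C) where
  sSup S := ofGenerators (fun g h => ⋃ I ∈ S, (I.carrier g h : Set (g ⟶ h)))
    (by simp only [Set.mem_iUnion]; exact fun r s ⟨I, hI, hr⟩ => ⟨I, hI, I.comp_left r s hr⟩)
    (by simp only [Set.mem_iUnion]; exact fun t r ⟨I, hI, hr⟩ => ⟨I, hI, I.comp_right t r hr⟩)
    (by simp only [Set.mem_iUnion]; exact fun s r ⟨I, hI, hr⟩ => ⟨I, hI, I.tensor_left s r hr⟩)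
    (by simp only [Set.mem_iUnion]; exact fun r s ⟨I, hI, hr⟩ => ⟨I, hI, I.tensor_right r s hr⟩)

theorem carrier_sSup (S : Set (HomIdeal C)) (g h : C) :
    (sSup S).carrier g h = ⨆ I ∈ S, I.carrier g h := by
  simp only [sSup, ofGenerators, AddSubgroup.closure_iUnion, AddSubgroup.closure_eq]

instance : CompleteLattice (HomIdeal C) :=
  completeLatticeOfSup (HomIdeal C) fun S =>
    ⟨fun I hI g h => by rw [carrier_sSup]; exact le_biSup (·.carrier g h) hI,
     fun J hJ g h => by rw [carrier_sSup]; exact iSup₂_le fun I hI => hJ hI g h⟩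

theorem carrier_iSup {ι : Sort*} (I : ι → HomIdeal C) (g h : C) :
    (⨆ i, I i).carrier g h = ⨆ i, (I i).carrier g h := by
  rw [iSup, carrier_sSup, iSup_range]

theorem carrier_sup (I J : HomIdeal C) (g h : C) :
    (I ⊔ J).carrier g h = I.carrier g h ⊔ J.carrier g h := by
  rw [show I ⊔ J = sSup {I, J} from rfl, carrier_sSup, iSup_pair]

end Lattice

section Span

variable [BraidedCategory C]

theorem mem_of_whiskerLeft_mem (I : HomIdeal C) {x x' : C} (e : x ⊗ x' ≅ 𝟙_ C) {g h : C}
    {r : g ⟶ h} (hr : x ◁ r ∈ I.carrier (x ⊗ g) (x ⊗ h)) : r ∈ I.carrier g h :=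
  I.mem_of_whiskerRight_mem e (by simpa using I.conj_mem hr (β_ g x).hom (β_ h x).inv)

variable [MonoidalPreadditive C] {x y : C}

def span (r : x ⟶ y) : HomIdeal C :=
  ofGenerators (spanGenerators r)
    (fun _ s hm => by simpa using conj_mem_spanGenerators hm (𝟙 _) s)
    (fun t _ hm => by simpa using conj_mem_spanGenerators hm t (𝟙 _))
    (fun s _ hm => tensorHom_mem_spanGenerators s hm)
    (fun _ s hm => by
      rw [tensorHom_eq_braiding_conj]
      exact conj_mem_spanGenerators (tensorHom_mem_spanGenerators s hm) _ _)

theorem mem_span_self (r : x ⟶ y) : r ∈ (span r).carrier x y :=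
  AddSubgroup.subset_closure ⟨𝟙_ C, (λ_ x).inv, (λ_ y).hom, by simp⟩

theorem span_le_iff {r : x ⟶ y} {I : HomIdeal C} : span r ≤ I ↔ r ∈ I.carrier x y := by
  refine ⟨fun hI => hI x y (mem_span_self r), fun hr g h => ?_⟩
  refine (AddSubgroup.closure_le _).2 ?_
  rintro _ ⟨c, u, v, rfl⟩
  exact I.conj_mem (by simpa using I.tensor_left (𝟙 c) r hr) u v

theorem tensorHom_mem_span_tensorHom {x' y' : C} {a : x ⟶ y} {b : x' ⟶ y'} {g h g' h' : C}
    {m : g ⟶ h} {m' : g' ⟶ h'} (hm : m ∈ (span a).carrier g h)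
    (hm' : m' ∈ (span b).carrier g' h') :
    m ⊗ₘ m' ∈ (span (a ⊗ₘ b)).carrier (g ⊗ g') (h ⊗ h') := by
  refine AddSubgroup.map₂_mem_of_mem_closure (MonoidalPreadditive.tensorHomAddHom _ _ _ _)
    ?_ hm hm'
  rintro _ ⟨c, u, v, rfl⟩ _ ⟨c', u', v', rfl⟩
  refine AddSubgroup.subset_closure
    ⟨c ⊗ c', (u ⊗ₘ u') ≫ tensorμ c x c' x', tensorδ c y c' y' ≫ (v ⊗ₘ v'), ?_⟩
  change (u ≫ c ◁ a ≫ v) ⊗ₘ (u' ≫ c' ◁ b ≫ v') = _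
  rw [← tensorHom_comp_tensorHom, ← tensorHom_comp_tensorHom, whiskerLeft_tensorHom_whiskerLeft]
  simp only [Category.assoc]

theorem tensorHom_mem_sup_span (I : HomIdeal C) {x' y' : C} {a : x ⟶ y} {b : x' ⟶ y'}
    {g h g' h' : C} {m : g ⟶ h} {m' : g' ⟶ h'} (hm : m ∈ (I ⊔ span a).carrier g h)
    (hm' : m' ∈ (I ⊔ span b).carrier g' h') :
    m ⊗ₘ m' ∈ (I ⊔ span (a ⊗ₘ b)).carrier (g ⊗ g') (h ⊗ h') := by
  rw [carrier_sup] at hm hm' ⊢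
  obtain ⟨i, hi, s, hs, rfl⟩ := AddSubgroup.mem_sup.1 hm
  obtain ⟨i', hi', s', hs', rfl⟩ := AddSubgroup.mem_sup.1 hm'
  simp only [MonoidalPreadditive.add_tensor, MonoidalPreadditive.tensor_add]
  refine add_mem (add_mem ?_ ?_) (add_mem ?_ ?_)
  · exact AddSubgroup.mem_sup_left (I.tensor_right i i' hi)
  · exact AddSubgroup.mem_sup_left (I.tensor_left s i' hi')
  · exact AddSubgroup.mem_sup_left (I.tensor_right i s' hi)
  · exact AddSubgroup.mem_sup_right (tensorHom_mem_span_tensorHom hs hs')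

end Span

section GradedComm2Ring

variable [SymmetricCategory C] [MonoidalPreadditive C] [GradedComm2Ring C]

theorem mem_of_id_mem (I : HomIdeal C) {x : C} (hx : 𝟙 x ∈ I.carrier x x) {g h : C}
    (f : g ⟶ h) : f ∈ I.carrier g h := by
  obtain ⟨x', ⟨e⟩⟩ := GradedComm2Ring.invertible x
  exact I.mem_of_whiskerRight_mem e (by simpa using I.tensor_left f (𝟙 x) hx)

theorem IsPrime.tensorHom_mem_iff {p : HomIdeal C} (hp : p.IsPrime) {g h g' h' : C}
    {r : g ⟶ h} {s : g' ⟶ h'} :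
    r ⊗ₘ s ∈ p.carrier (g ⊗ g') (h ⊗ h') ↔ r ∈ p.carrier g h ∨ s ∈ p.carrier g' h' := by
  refine ⟨fun hrs => ?_, fun hrs => hrs.elim (p.tensor_right r s) (p.tensor_left r s)⟩
  obtain ⟨g'', ⟨e⟩⟩ := GradedComm2Ring.invertible g'
  obtain ⟨h'', ⟨e'⟩⟩ := GradedComm2Ring.invertible h
  rw [MonoidalCategory.tensorHom_def] at hrs
  exact (hp.mem_or_mem _ _ hrs).imp (p.mem_of_whiskerRight_mem e) (p.mem_of_whiskerLeft_mem e')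

theorem IsPrime.mem_of_tensorPowMap_mem {p : HomIdeal C} (hp : p.IsPrime) {x y : C}
    {r : x ⟶ y} {n : ℕ} (hn : tensorPowMap r n ∈ p.carrier _ _) : r ∈ p.carrier x y := by
  induction n with
  | zero => exact absurd hn (hp.isProper _)
  | succ n ih => exact (hp.tensorHom_mem_iff.1 hn).elim ih id

theorem tensorHom_mem_span_comp {x y z : C} (a : x ⟶ y) (b : y ⟶ z) :
    a ⊗ₘ b ∈ (span (a ≫ b)).carrier (x ⊗ y) (y ⊗ z) := by
  obtain ⟨y', ⟨e⟩⟩ := GradedComm2Ring.invertible y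
  obtain ⟨θ, hθ⟩ := exists_whiskerRight_eq e (β_ y y).inv
  refine AddSubgroup.subset_closure ⟨y, (β_ x y).hom ≫ θ ▷ x, 𝟙 _, ?_⟩
  have ha : a ▷ y = (β_ x y).hom ≫ y ◁ a ≫ θ ▷ y := by
    rw [hθ, ← BraidedCategory.braiding_naturality_left_assoc]
    simp
  rw [MonoidalCategory.tensorHom_def, ha]
  simp [whisker_exchange_assoc]

theorem isPrime_of_maximally_disjoint {x y : C} {r : x ⟶ y} {M : HomIdeal C}
    (hM : Maximal (fun I : HomIdeal C => ∀ n, tensorPowMap r n ∉ I.carrier _ _) M) :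
    M.IsPrime := by
  refine ⟨fun g hg => hM.1 0 (M.mem_of_id_mem hg _), fun {g h l} a b hab => ?_⟩
  by_contra! ⟨ha, hb⟩
  have hpow : ∀ {g h : C} (w : g ⟶ h), w ∉ M.carrier g h →
      ∃ n, tensorPowMap r n ∈ (M ⊔ span w).carrier _ _ := by
    intro g h w hw
    by_contra! hno
    exact hw (hM.2 hno le_sup_left g h ((le_sup_right : span w ≤ _) g h (mem_span_self w)))
  obtain ⟨m, hm⟩ := hpow a ha
  obtain ⟨n, hn⟩ := hpow b hb
  obtain ⟨u, v, huv⟩ := tensorPowMap_add r m n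
  have hle : M ⊔ span (a ⊗ₘ b) ≤ M :=
    sup_le le_rfl (span_le_iff.2 ((span_le_iff.2 hab) _ _ (tensorHom_mem_span_comp a b)))
  exact hM.1 (m + n) (huv ▸ M.conj_mem (hle _ _ (M.tensorHom_mem_sup_span hm hn)) u v)

theorem exists_tensorPowMap_mem_of_forall_isPrime (J : HomIdeal C) {x y : C} (r : x ⟶ y)
    (H : ∀ p : HomIdeal C, p.IsPrime → J ≤ p → r ∈ p.carrier x y) :
    ∃ n, tensorPowMap r n ∈ J.carrier _ _ := by
  by_contra! hJ
  let Ω := {I : HomIdeal C | J ≤ I ∧ ∀ n, tensorPowMap r n ∉ I.carrier _ _}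
  have hchain : ∀ c ⊆ Ω, IsChain (· ≤ ·) c → ∀ I ∈ c, ∃ ub ∈ Ω, ∀ I' ∈ c, I' ≤ ub := by
    intro c hc hchain I hI
    refine ⟨sSup c, ⟨(hc hI).1.trans (le_sSup hI), fun n hn => ?_⟩, fun _ => le_sSup⟩
    rw [carrier_sSup, AddSubgroup.mem_biSup_of_directedOn hI
      (hchain.directedOn.mono fun I I' h => h _ _)] at hn
    obtain ⟨I', hI', hn⟩ := hn
    exact (hc hI').2 n hn
  obtain ⟨M, hJM, hM⟩ := zorn_le_nonempty₀ Ω hchain J ⟨le_rfl, hJ⟩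
  have hprime := isPrime_of_maximally_disjoint (r := r)
    ⟨hM.1.2, fun I hI hMI => hM.2 ⟨hJM.trans hMI, hI⟩ hMI⟩
  exact hM.1.2 1 (M.tensor_left _ r (H M hprime hM.1.1))

end GradedComm2Ring

end HomIdeal

section Topology

open HomIdeal MonoidalCategory TopologicalSpace

variable {C : Type u} [Category.{v} C] [Preadditive C] [MonoidalCategory C]

theorem mem_zeroLocus {I : HomIdeal C} {p : Spec C} : p ∈ zeroLocus I ↔ I ≤ p.1 := Iff.rfl

theorem isOpen_compl_zeroLocus (I : HomIdeal C) : IsOpen (zeroLocus I)ᶜ :=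
  GenerateOpen.basic _ ⟨I, rfl⟩

theorem basicOpen_id (x : C) : basicOpen (𝟙 x) = (Set.univ : Set (Spec C)) :=
  Set.eq_univ_of_forall fun p => p.2.isProper x

theorem compl_zeroLocus_eq_iUnion_basicOpen (I : HomIdeal C) :
    (zeroLocus I)ᶜ = ⋃ (g : C) (h : C) (r ∈ I.carrier g h), basicOpen r := by
  ext p
  simp [mem_zeroLocus, basicOpen, le_def]

def vanishingIdeal (Z : Set (Spec C)) : HomIdeal C where
  carrier g h := ⨅ p ∈ Z, p.1.carrier g h
  comp_left r s hr := by
    simp only [AddSubgroup.mem_iInf] at hr ⊢; exact fun p hp => p.1.comp_left r s (hr p hp)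
  comp_right t r hr := by
    simp only [AddSubgroup.mem_iInf] at hr ⊢; exact fun p hp => p.1.comp_right t r (hr p hp)
  tensor_left s r hr := by
    simp only [AddSubgroup.mem_iInf] at hr ⊢; exact fun p hp => p.1.tensor_left s r (hr p hp)
  tensor_right r s hr := by
    simp only [AddSubgroup.mem_iInf] at hr ⊢; exact fun p hp => p.1.tensor_right r s (hr p hp)

theorem mem_vanishingIdeal {Z : Set (Spec C)} {g h : C} {r : g ⟶ h} :
    r ∈ (vanishingIdeal Z).carrier g h ↔ ∀ p ∈ Z, r ∈ p.1.carrier g h := by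
  simp [vanishingIdeal, AddSubgroup.mem_iInf]

theorem vanishingIdeal_singleton (p : Spec C) : vanishingIdeal {p} = p.1 :=
  le_antisymm (le_def.2 fun _ _ _ hr => mem_vanishingIdeal.1 hr p rfl)
    (le_def.2 fun _ _ _ hr => mem_vanishingIdeal.2 fun _ hq => hq ▸ hr)

theorem zeroLocus_iSup [MonoidalPreadditive C] {ι : Sort*} (I : ι → HomIdeal C) :
    zeroLocus (⨆ i, I i) = ⋂ i, zeroLocus (I i) := by
  ext p
  simp [mem_zeroLocus]

section Symmetric

variable [SymmetricCategory C] [MonoidalPreadditive C]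

theorem basicOpen_eq_compl_zeroLocus_span {g h : C} (r : g ⟶ h) :
    basicOpen r = (zeroLocus (span r))ᶜ := by
  ext p
  simp [basicOpen, mem_zeroLocus, span_le_iff]

theorem isOpen_basicOpen {g h : C} (r : g ⟶ h) : IsOpen (basicOpen r) := by
  rw [basicOpen_eq_compl_zeroLocus_span]
  exact isOpen_compl_zeroLocus _

theorem isPrime_vanishingIdeal {Z : Set (Spec C)} (hZ : IsIrreducible Z) :
    (vanishingIdeal Z).IsPrime := by
  refine ⟨fun g hg => ?_, fun a b hab => ?_⟩
  · obtain ⟨p, hp⟩ := hZ.nonempty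
    exact p.2.isProper g (mem_vanishingIdeal.1 hg p hp)
  · by_contra! ⟨ha, hb⟩
    simp only [mem_vanishingIdeal, not_forall] at ha hb
    obtain ⟨p, hpZ, hpa⟩ := ha
    obtain ⟨q, hqZ, hqb⟩ := hb
    obtain ⟨s, hsZ, hsa, hsb⟩ :=
      hZ.2 _ _ (isOpen_basicOpen a) (isOpen_basicOpen b) ⟨p, hpZ, hpa⟩ ⟨q, hqZ, hqb⟩
    exact (s.2.mem_or_mem a b (mem_vanishingIdeal.1 hab s hsZ)).elim hsa hsb

variable [GradedComm2Ring C]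

theorem basicOpen_inter {g h g' h' : C} (r : g ⟶ h) (s : g' ⟶ h') :
    basicOpen r ∩ basicOpen s = (basicOpen (r ⊗ₘ s) : Set (Spec C)) := by
  ext p
  simp [basicOpen, p.2.tensorHom_mem_iff]

theorem isTopologicalBasis_basicOpen : IsTopologicalBasis
    {U : Set (Spec C) | ∃ (g h : C) (r : g ⟶ h), U = basicOpen r} where
  exists_subset_inter := by
    rintro _ ⟨g, h, r, rfl⟩ _ ⟨g', h', s, rfl⟩ p hp
    exact ⟨_, ⟨_, _, r ⊗ₘ s, rfl⟩, basicOpen_inter r s ▸ hp, (basicOpen_inter r s).ge⟩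
  sUnion_eq := Set.eq_univ_of_forall fun p =>
    ⟨_, ⟨_, _, 𝟙 (𝟙_ C), rfl⟩, basicOpen_id (𝟙_ C) ▸ Set.mem_univ p⟩
  eq_generateFrom := by
    refine le_antisymm (le_generateFrom ?_) (le_generateFrom ?_)
    · rintro _ ⟨g, h, r, rfl⟩
      exact isOpen_basicOpen r
    · rintro _ ⟨I, rfl⟩
      -- the openness to prove is for the topology generated by the basic opens
      let _ : TopologicalSpace (Spec C) :=
        generateFrom {U | ∃ (g h : C) (r : g ⟶ h), U = basicOpen r}
      rw [compl_zeroLocus_eq_iUnion_basicOpen]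
      exact isOpen_iUnion fun g => isOpen_iUnion fun h => isOpen_biUnion fun r _ =>
        GenerateOpen.basic _ ⟨g, h, r, rfl⟩

theorem closure_eq_zeroLocus_vanishingIdeal (Z : Set (Spec C)) :
    closure Z = zeroLocus (vanishingIdeal Z) := by
  ext q
  rw [isTopologicalBasis_basicOpen.mem_closure_iff]
  constructor
  · intro H g h r hr
    by_contra hq
    obtain ⟨p, hpr, hpZ⟩ := H _ ⟨g, h, r, rfl⟩ hq
    exact hpr (mem_vanishingIdeal.1 hr p hpZ)
  · rintro H _ ⟨g, h, r, rfl⟩ hq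
    by_contra! hZ
    exact hq (H g h (mem_vanishingIdeal.2 fun p hp => not_not.1 fun hpr => hZ.subset ⟨hpr, hp⟩))

theorem closure_singleton_eq_zeroLocus (p : Spec C) : closure {p} = zeroLocus p.1 := by
  rw [closure_eq_zeroLocus_vanishingIdeal, vanishingIdeal_singleton]

instance : T0Space (Spec C) where
  t0 p q hpq := by
    rw [inseparable_iff_closure_eq, closure_singleton_eq_zeroLocus,
      closure_singleton_eq_zeroLocus] at hpq
    have hq : q ∈ zeroLocus p.1 := hpq ▸ mem_zeroLocus.2 le_rfl
    have hp : p ∈ zeroLocus q.1 := hpq ▸ mem_zeroLocus.2 le_rfl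
    exact Subtype.ext (le_antisymm hq hp)

theorem existsUnique_isGenericPoint {Z : Set (Spec C)} (hZ : IsIrreducible Z)
    (hZc : IsClosed Z) : ∃! p : Spec C, IsGenericPoint p Z := by
  let p : Spec C := ⟨vanishingIdeal Z, isPrime_vanishingIdeal hZ⟩
  have hp : IsGenericPoint p Z := by
    rw [isGenericPoint_def, closure_singleton_eq_zeroLocus]
    exact (closure_eq_zeroLocus_vanishingIdeal Z).symm.trans hZc.closure_eq
  exact ⟨p, hp, fun _ hq => hq.eq hp⟩

theorem basicOpen_subset_compl_zeroLocus_iff {g h : C} (r : g ⟶ h) (I : HomIdeal C) :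
    basicOpen r ⊆ (zeroLocus I)ᶜ ↔ ∃ n, tensorPowMap r n ∈ I.carrier _ _ := by
  refine ⟨fun H => I.exists_tensorPowMap_mem_of_forall_isPrime r fun p hp hIp => ?_, ?_⟩
  · by_contra hr
    exact H (a := ⟨p, hp⟩) hr hIp
  · rintro ⟨n, hn⟩ p hr hIp
    exact hr (p.2.mem_of_tensorPowMap_mem (hIp _ _ hn))

theorem isCompact_basicOpen {g h : C} (r : g ⟶ h) : IsCompact (basicOpen r) := by
  refine isCompact_generateFrom' rfl fun ι U hcover => ?_
  choose I hI using fun i => (U i).2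
  simp only [hI, ← Set.compl_iInter, ← zeroLocus_iSup, basicOpen_subset_compl_zeroLocus_iff,
    carrier_iSup] at hcover ⊢
  obtain ⟨n, hn⟩ := hcover
  obtain ⟨F, hF⟩ := AddSubgroup.exists_finset_of_mem_iSup hn
  exact ⟨F, F.finite_toSet, n, hF⟩

end Symmetric

end Topology

/-- **Statement 11.** The spectrum of a graded commutative 2-ring is a spectral space:
it is T₀, quasi-compact, the basic opens `D_r` form a basis of quasi-compact open
subsets closed under finite (pairwise) intersections, and every irreducible closed
subset has a unique generic point. -/
theorem spec_is_spectral
    {C : Type u} [Category.{v} C] [Preadditive C] [MonoidalCategory C]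
    [SymmetricCategory C] [MonoidalPreadditive C] [GradedComm2Ring C] :
    T0Space (Spec C) ∧
    CompactSpace (Spec C) ∧
    TopologicalSpace.IsTopologicalBasis
      {U : Set (Spec C) | ∃ (g h : C) (r : g ⟶ h), U = basicOpen r} ∧
    (∀ {g h : C} (r : g ⟶ h), IsCompact (basicOpen r)) ∧
    (∀ {g h g' h' : C} (r : g ⟶ h) (s : g' ⟶ h'),
      ∃ (a b : C) (t : a ⟶ b), basicOpen r ∩ basicOpen s = basicOpen t) ∧
    (∀ Z : Set (Spec C), IsIrreducible Z → IsClosed Z →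
      ∃! p : Spec C, closure {p} = Z) :=
  ⟨inferInstance, ⟨basicOpen_id (𝟙_ C) ▸ isCompact_basicOpen _⟩, isTopologicalBasis_basicOpen,
    isCompact_basicOpen, fun r s => ⟨_, _, r ⊗ₘ s, basicOpen_inter r s⟩,
    fun _ hZ hZc => existsUnique_isGenericPoint hZ hZc⟩
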